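/- The orientation-recovery result holds in an arbitrary coordinate frame: if u ∈ ℝ³ satisfies ‖u‖ = 1 and J₃'(v) ≤ J₃'(u) for every v ∈ ℝ³ with ‖v‖ = 1, then u = bᵢ or u = −bᵢ for some i ∈ {1, 2, 3}. -/
import Mathlib


open scoped RealInnerProductSpace

/-- The image-source grid `G'` in an arbitrary coordinate frame: points
`t + Σᵢ (εᵢdᵢ + 2qᵢLᵢ) bᵢ` with `εᵢ ∈ {-1, 1}` and `qᵢ ∈ {0, …, Nᵢ/2 - 1}`,
where `b` is an orthonormal basis and `t` a translation. -/
noncomputable def grid3' (b : Fin 3 → EuclideanSpace ℝ (Fin 3))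
    (t : EuclideanSpace ℝ (Fin 3)) (L d : Fin 3 → ℝ) (N : Fin 3 → ℕ) :
    Set (EuclideanSpace ℝ (Fin 3)) :=
  {x | ∃ (ε : Fin 3 → ℝ) (q : Fin 3 → ℤ),
    (∀ i, ε i = 1 ∨ ε i = -1) ∧
    (∀ i, 0 ≤ q i ∧ q i < (N i / 2 : ℕ)) ∧
    x = t + ∑ i, (ε i * d i + 2 * (q i : ℝ) * L i) • b i}

/-- The orthogonality score `J₃'(u)`: the number of ordered pairs `(s, p) ∈ G' × G'`
with `⟨u, s - p⟩ = 0`. -/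
noncomputable def J3' (b : Fin 3 → EuclideanSpace ℝ (Fin 3))
    (t : EuclideanSpace ℝ (Fin 3)) (L d : Fin 3 → ℝ) (N : Fin 3 → ℕ)
    (u : EuclideanSpace ℝ (Fin 3)) : ℕ :=
  {sp : EuclideanSpace ℝ (Fin 3) × EuclideanSpace ℝ (Fin 3) |
    sp.1 ∈ grid3' b t L d N ∧ sp.2 ∈ grid3' b t L d N ∧ ⟪u, sp.1 - sp.2⟫ = 0}.ncard

/-- Coordinate values of the grid along axis `i`. -/
noncomputable def gridCoords (L d : Fin 3 → ℝ) (N : Fin 3 → ℕ) (i : Fin 3) : Finset ℝ :=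
  ((Finset.range (N i / 2)).image fun q : ℕ => d i + 2 * (q : ℝ) * L i) ∪
  ((Finset.range (N i / 2)).image fun q : ℕ => -(d i) + 2 * (q : ℝ) * L i)

/-- Abstract pair count. -/
noncomputable def Kcount (L d : Fin 3 → ℝ) (N : Fin 3 → ℕ) (a : Fin 3 → ℝ) : ℕ :=
  ((Fintype.piFinset (gridCoords L d N) ×ˢ Fintype.piFinset (gridCoords L d N)).filter
    (fun p => ∑ k, a k * (p.1 k - p.2 k) = 0)).card

lemma d_mem_gridCoords (L d : Fin 3 → ℝ) (N : Fin 3 → ℕ) (hN : ∀ i, 0 < N i ∧ Even (N i))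
    (i : Fin 3) : d i ∈ gridCoords L d N i := by
  have h2 : 0 < N i / 2 := by
    obtain ⟨hpos, k, hk⟩ := hN i
    omega
  exact Finset.mem_union_left _ (Finset.mem_image.2 ⟨0, Finset.mem_range.2 h2, by simp⟩)

lemma neg_d_mem_gridCoords (L d : Fin 3 → ℝ) (N : Fin 3 → ℕ) (hN : ∀ i, 0 < N i ∧ Even (N i))
    (i : Fin 3) : -(d i) ∈ gridCoords L d N i := by
  have h2 : 0 < N i / 2 := by
    obtain ⟨hpos, k, hk⟩ := hN i
    omega
  exact Finset.mem_union_right _ (Finset.mem_image.2 ⟨0, Finset.mem_range.2 h2, by simp⟩)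

lemma gridCoords_nonempty (L d : Fin 3 → ℝ) (N : Fin 3 → ℕ) (hN : ∀ i, 0 < N i ∧ Even (N i))
    (i : Fin 3) : (gridCoords L d N i).Nonempty :=
  ⟨d i, d_mem_gridCoords L d N hN i⟩

/-- The grid is the image of the coordinate cube. -/
lemma grid3'_eq_image (b : Fin 3 → EuclideanSpace ℝ (Fin 3)) (t : EuclideanSpace ℝ (Fin 3))
    (L d : Fin 3 → ℝ) (N : Fin 3 → ℕ) :
    grid3' b t L d N =
      (fun c : Fin 3 → ℝ => t + ∑ k, c k • b k) ''
        (Fintype.piFinset (gridCoords L d N) : Set (Fin 3 → ℝ)) := by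
  ext x
  constructor
  · rintro ⟨ε, q, hε, hq, rfl⟩
    refine ⟨fun k => ε k * d k + 2 * (q k : ℝ) * L k, ?_, rfl⟩
    simp only [Finset.coe_sort_coe, Set.mem_image, Fintype.coe_piFinset, Set.mem_pi,
      Set.mem_univ, forall_true_left, Finset.mem_coe]
    intro k
    have hq0 := (hq k).1
    have hq1 := (hq k).2
    have hqn : (((q k).toNat : ℝ)) = ((q k : ℝ)) := by
      exact_mod_cast congrArg (fun z : ℤ => (z : ℝ)) (Int.toNat_of_nonneg hq0)
    have hmemr : (q k).toNat ∈ Finset.range (N k / 2) := by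
      refine Finset.mem_range.2 ?_
      omega
    rcases hε k with h1 | h1
    · refine Finset.mem_union_left _ (Finset.mem_image.2 ⟨(q k).toNat, hmemr, ?_⟩)
      rw [hqn, h1]; ring
    · refine Finset.mem_union_right _ (Finset.mem_image.2 ⟨(q k).toNat, hmemr, ?_⟩)
      rw [hqn, h1]; ring
  · rintro ⟨c, hc, rfl⟩
    simp only [Finset.coe_sort_coe, Fintype.coe_piFinset, Set.mem_pi, Set.mem_univ,
      forall_true_left, Finset.mem_coe] at hc
    have hex : ∀ k, ∃ (e : ℝ) (n : ℕ), (e = 1 ∨ e = -1) ∧ n < N k / 2 ∧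
        c k = e * d k + 2 * (n : ℝ) * L k := by
      intro k
      rcases Finset.mem_union.1 (hc k) with h | h
      · obtain ⟨n, hn, hcn⟩ := Finset.mem_image.1 h
        exact ⟨1, n, Or.inl rfl, Finset.mem_range.1 hn, by rw [← hcn]; ring⟩
      · obtain ⟨n, hn, hcn⟩ := Finset.mem_image.1 h
        exact ⟨-1, n, Or.inr rfl, Finset.mem_range.1 hn, by rw [← hcn]; ring⟩
    choose e n he hn hc' using hex
    refine ⟨e, fun k => (n k : ℤ), he, ?_, ?_⟩
    · intro k
      refine ⟨Int.natCast_nonneg _, ?_⟩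
      show ((n k : ℤ)) < ((N k / 2 : ℕ) : ℤ)
      exact_mod_cast hn k
    · show t + ∑ k, c k • b k = _
      congr 1
      apply Finset.sum_congr rfl
      intro k _
      rw [hc' k]
      norm_num
lemma J3'_eq_Kcount (b : Fin 3 → EuclideanSpace ℝ (Fin 3)) (hb : Orthonormal ℝ b)
    (t : EuclideanSpace ℝ (Fin 3)) (L d : Fin 3 → ℝ) (N : Fin 3 → ℕ)
    (u : EuclideanSpace ℝ (Fin 3)) :
    J3' b t L d N u = Kcount L d N (fun k => ⟪u, b k⟫) := by
  classical
  set φ : (Fin 3 → ℝ) → EuclideanSpace ℝ (Fin 3) := fun c => t + ∑ k, c k • b k with hφdef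
  have hφ : Function.Injective φ := by
    intro c c' h
    have h1 : ∑ k, c k • b k = ∑ k, c' k • b k := add_left_cancel h
    have h2 : ∑ k, (c k - c' k) • b k = 0 := by
      simp only [sub_smul, Finset.sum_sub_distrib, h1, sub_self]
    have h3 := Fintype.linearIndependent_iff.mp hb.linearIndependent _ h2
    funext k
    have := h3 k
    linarith
  have hinner : ∀ c c' : Fin 3 → ℝ,
      ⟪u, φ c - φ c'⟫ = ∑ k, (⟪u, b k⟫) * (c k - c' k) := by
    intro c c'
    have hsub : φ c - φ c' = ∑ k, (c k - c' k) • b k := by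
      simp only [hφdef, sub_smul, Finset.sum_sub_distrib]
      abel
    rw [hsub, inner_sum]
    refine Finset.sum_congr rfl fun k _ => ?_
    rw [real_inner_smul_right]
    ring
  have hset : {sp : EuclideanSpace ℝ (Fin 3) × EuclideanSpace ℝ (Fin 3) |
      sp.1 ∈ grid3' b t L d N ∧ sp.2 ∈ grid3' b t L d N ∧ ⟪u, sp.1 - sp.2⟫ = 0} =
      Prod.map φ φ '' ((((Fintype.piFinset (gridCoords L d N) ×ˢ
          Fintype.piFinset (gridCoords L d N)).filter
        (fun p => ∑ k, (⟪u, b k⟫) * (p.1 k - p.2 k) = 0)) : Finset _) : Set _) := by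
    ext sp
    constructor
    · rintro ⟨h1, h2, h3⟩
      rw [grid3'_eq_image b t L d N] at h1 h2
      obtain ⟨c, hc, hc1⟩ := h1
      obtain ⟨c', hc', hc2⟩ := h2
      refine ⟨(c, c'), ?_, ?_⟩
      · rw [Finset.mem_coe, Finset.mem_filter, Finset.mem_product]
        refine ⟨⟨hc, hc'⟩, ?_⟩
        rw [← hinner c c']
        show ⟪u, φ c - φ c'⟫ = 0
        rw [show φ c = sp.1 from hc1, show φ c' = sp.2 from hc2]
        exact h3
      · exact Prod.ext hc1 hc2
    · rintro ⟨⟨c, c'⟩, hmem, rfl⟩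
      rw [Finset.mem_coe, Finset.mem_filter, Finset.mem_product] at hmem
      obtain ⟨⟨hc, hc'⟩, hsum⟩ := hmem
      refine ⟨?_, ?_, ?_⟩
      · rw [grid3'_eq_image b t L d N]; exact ⟨c, hc, rfl⟩
      · rw [grid3'_eq_image b t L d N]; exact ⟨c', hc', rfl⟩
      · show ⟪u, φ c - φ c'⟫ = 0
        rw [hinner c c']
        exact hsum
  rw [J3', hset, Set.ncard_image_of_injective _ (hφ.prodMap hφ), Set.ncard_coe_finset, Kcount]
lemma Kcount_lt (L d : Fin 3 → ℝ) (N : Fin 3 → ℕ)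
    (hd : ∀ i, 0 < d i ∧ d i < L i) (hN : ∀ i, 0 < N i ∧ Even (N i))
    (a : Fin 3 → ℝ) (i j : Fin 3) (hij : j ≠ i) (hai : a i ≠ 0) (haj : a j ≠ 0) :
    Kcount L d N a < Kcount L d N (Pi.single i 1) := by
  classical
  set P := Fintype.piFinset (gridCoords L d N) with hP
  set Fa := (P ×ˢ P).filter (fun p => ∑ k, a k * (p.1 k - p.2 k) = 0) with hFa
  set Fe := (P ×ˢ P).filter
    (fun p => ∑ k, (Pi.single i (1 : ℝ) : Fin 3 → ℝ) k * (p.1 k - p.2 k) = 0) with hFe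
  have hsingle : ∀ x : Fin 3 → ℝ,
      ∑ k, (Pi.single i (1 : ℝ) : Fin 3 → ℝ) k * x k = x i := by
    intro x
    have h := Finset.sum_eq_single (s := Finset.univ)
      (f := fun k => (Pi.single i (1 : ℝ) : Fin 3 → ℝ) k * x k) i
      (fun k _ hk => by simp [Pi.single_eq_of_ne hk])
      (fun h => absurd (Finset.mem_univ i) h)
    rw [h]
    simp
  set ψ : (Fin 3 → ℝ) × (Fin 3 → ℝ) → (Fin 3 → ℝ) × (Fin 3 → ℝ) :=
    fun p => (p.1, Function.update p.2 i (p.1 i)) with hψ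
  -- ψ maps Fa into Fe
  have hmaps : ∀ p ∈ Fa, ψ p ∈ Fe := by
    intro p hp
    rw [hFa, Finset.mem_filter, Finset.mem_product] at hp
    obtain ⟨⟨hp1, hp2⟩, _⟩ := hp
    rw [hFe, Finset.mem_filter, Finset.mem_product]
    refine ⟨⟨hp1, ?_⟩, ?_⟩
    · show Function.update p.2 i (p.1 i) ∈ P
      rw [hP, Fintype.mem_piFinset]
      intro k
      rcases eq_or_ne k i with hk | hk
      · subst hk
        rw [Function.update_self]
        exact Fintype.mem_piFinset.1 hp1 k
      · rw [Function.update_of_ne hk]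
        exact Fintype.mem_piFinset.1 hp2 k
    · show ∑ k, (Pi.single i (1 : ℝ) : Fin 3 → ℝ) k *
        ((p.1 : Fin 3 → ℝ) k - Function.update p.2 i (p.1 i) k) = 0
      rw [hsingle]
      rw [Function.update_self, sub_self]
  -- ψ is injective on Fa
  have hinj : Set.InjOn ψ ↑Fa := by
    intro p hp p' hp' heq
    rw [Finset.mem_coe, hFa, Finset.mem_filter] at hp hp'
    have Sa := hp.2
    have Sa' := hp'.2
    have h1 : p.1 = p'.1 := by
      have := congrArg Prod.fst heq
      simpa [hψ] using this
    have h2 : Function.update p.2 i (p.1 i) = Function.update p'.2 i (p'.1 i) := by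
      have := congrArg Prod.snd heq
      simpa [hψ] using this
    have hoff : ∀ k, k ≠ i → p.2 k = p'.2 k := by
      intro k hk
      have := congrFun h2 k
      rwa [Function.update_of_ne hk, Function.update_of_ne hk] at this
    have hgi : a i * (p.1 i - p.2 i) - a i * (p'.1 i - p'.2 i) = 0 := by
      have hsum : ∑ k, (a k * (p.1 k - p.2 k) - a k * (p'.1 k - p'.2 k)) = 0 := by
        rw [Finset.sum_sub_distrib, Sa, Sa', sub_self]
      rw [← hsum]
      exact (Finset.sum_eq_single
        (f := fun k => a k * (p.1 k - p.2 k) - a k * (p'.1 k - p'.2 k)) i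
        (fun k _ hk => by simp only [h1, hoff k hk]; ring)
        (fun h => absurd (Finset.mem_univ i) h)).symm
    have h2i : p.2 i = p'.2 i := by
      rw [h1] at hgi
      have : a i * (p'.2 i - p.2 i) = 0 := by ring_nf; ring_nf at hgi; linarith
      have := mul_eq_zero.1 this
      rcases this with h | h
      · exact absurd h hai
      · linarith
    have h2' : p.2 = p'.2 := by
      funext k
      rcases eq_or_ne k i with rfl | hk
      · exact h2i
      · exact hoff k hk
    exact Prod.ext h1 h2'
  -- the witness
  have hne : ∀ k, (gridCoords L d N k).Nonempty := gridCoords_nonempty L d N hN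
  set w : ℝ := 2 * a j * d j / a i with hw
  have hw0 : w ≠ 0 := by
    apply div_ne_zero _ hai
    have := (hd j).1
    positivity
  set m : ℝ := if 0 < w then (gridCoords L d N i).max' (hne i)
    else (gridCoords L d N i).min' (hne i) with hm
  have hmmem : m ∈ gridCoords L d N i := by
    rw [hm]
    split
    · exact Finset.max'_mem _ _
    · exact Finset.min'_mem _ _
  set cs : Fin 3 → ℝ := Function.update (fun k => d k) i m with hcs
  set cp : Fin 3 → ℝ := Function.update cs j (-(d j)) with hcp
  have hcsi : cs i = m := Function.update_self _ _ _
  have hcsk : ∀ k, k ≠ i → cs k = d k := fun k hk => Function.update_of_ne hk _ _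
  have hcpi : cp i = m := by
    rw [hcp, Function.update_of_ne (Ne.symm hij), hcsi]
  have hcpj : cp j = -(d j) := Function.update_self _ _ _
  have hcpk : ∀ k, k ≠ i → k ≠ j → cp k = d k := by
    intro k hk1 hk2
    rw [hcp, Function.update_of_ne hk2, hcsk k hk1]
  have hcsP : cs ∈ P := by
    rw [hP, Fintype.mem_piFinset]
    intro k
    rcases eq_or_ne k i with rfl | hk
    · rw [hcsi]; exact hmmem
    · rw [hcsk k hk]; exact d_mem_gridCoords L d N hN k
  have hcpP : cp ∈ P := by
    rw [hP, Fintype.mem_piFinset]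
    intro k
    rcases eq_or_ne k j with rfl | hk
    · rw [hcpj]; exact neg_d_mem_gridCoords L d N hN k
    · rw [hcp, Function.update_of_ne hk]
      exact Fintype.mem_piFinset.1 hcsP k
  have hwitFe : (cs, cp) ∈ Fe := by
    rw [hFe, Finset.mem_filter, Finset.mem_product]
    refine ⟨⟨hcsP, hcpP⟩, ?_⟩
    rw [hsingle]
    show cs i - cp i = 0
    rw [hcsi, hcpi, sub_self]
  have hwitnot : (cs, cp) ∉ Fa.image ψ := by
    intro hmem
    obtain ⟨p, hp, hψp⟩ := Finset.mem_image.1 hmem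
    rw [hFa, Finset.mem_filter, Finset.mem_product] at hp
    obtain ⟨⟨hp1, hp2⟩, hpsum⟩ := hp
    have hc1 : p.1 = cs := congrArg Prod.fst hψp
    have hc2 : Function.update p.2 i (p.1 i) = cp := congrArg Prod.snd hψp
    have hp2off : ∀ k, k ≠ i → p.2 k = cp k := by
      intro k hk
      have := congrFun hc2 k
      rwa [Function.update_of_ne hk] at this
    -- evaluate the sum
    have hsum2 : a i * (m - p.2 i) + a j * (2 * d j) = 0 := by
      have hsub : ∑ k ∈ ({i, j} : Finset (Fin 3)), a k * (p.1 k - p.2 k)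
          = ∑ k, a k * (p.1 k - p.2 k) := by
        apply Finset.sum_subset (Finset.subset_univ _)
        intro k _ hk
        simp only [Finset.mem_insert, Finset.mem_singleton, not_or] at hk
        rw [hc1, hcsk k hk.1, hp2off k hk.1, hcpk k hk.1 hk.2, sub_self, mul_zero]
      rw [hpsum] at hsub
      rw [Finset.sum_pair (Ne.symm hij)] at hsub
      rw [hc1, hcsi, hcsk j hij, hp2off j hij, hcpj] at hsub
      linarith [hsub]
    have hp2i : p.2 i = m + w := by
      rw [hw]
      field_simp
      nlinarith [hsum2]
    have hp2imem : p.2 i ∈ gridCoords L d N i := Fintype.mem_piFinset.1 hp2 i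
    rcases lt_or_gt_of_ne hw0 with hneg | hpos
    · have hmmin : m = (gridCoords L d N i).min' (hne i) := by
        rw [hm, if_neg (by linarith)]
      have := Finset.min'_le _ _ hp2imem
      rw [← hmmin] at this
      linarith [hp2i ▸ this]
    · have hmmax : m = (gridCoords L d N i).max' (hne i) := by
        rw [hm, if_pos hpos]
      have := Finset.le_max' _ _ hp2imem
      rw [← hmmax] at this
      rw [hp2i] at this
      linarith
  -- conclude
  have hsub : Fa.image ψ ⊆ Fe := by
    intro x hx
    obtain ⟨p, hp, rfl⟩ := Finset.mem_image.1 hx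
    exact hmaps p hp
  have hss : Fa.image ψ ⊂ Fe := ⟨hsub, fun h => hwitnot (h hwitFe)⟩
  calc Kcount L d N a = Fa.card := rfl
    _ = (Fa.image ψ).card := (Finset.card_image_of_injOn hinj).symm
    _ < Fe.card := Finset.card_lt_card hss
    _ = Kcount L d N (Pi.single i 1) := rfl
/-- Orientation recovery in an arbitrary coordinate frame: every maximizer of `J₃'` over
the unit sphere is one of the (signed) basis vectors `±bᵢ`. -/
theorem maximizer_is_wall_normal_general_frame
    (b : Fin 3 → EuclideanSpace ℝ (Fin 3)) (hb : Orthonormal ℝ b)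
    (t : EuclideanSpace ℝ (Fin 3)) (L d : Fin 3 → ℝ) (N : Fin 3 → ℕ)
    (hL : ∀ i, 0 < L i) (hd : ∀ i, 0 < d i ∧ d i < L i)
    (hN : ∀ i, 0 < N i ∧ Even (N i))
    (u : EuclideanSpace ℝ (Fin 3)) (hu : ‖u‖ = 1)
    (hmax : ∀ v : EuclideanSpace ℝ (Fin 3), ‖v‖ = 1 →
      J3' b t L d N v ≤ J3' b t L d N u) :
    ∃ i : Fin 3, u = b i ∨ u = -b i := by
  classical
  have hcard : Fintype.card (Fin 3) = Module.finrank ℝ (EuclideanSpace ℝ (Fin 3)) := by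
    simp [finrank_euclideanSpace_fin]
  have hspan : ⊤ ≤ Submodule.span ℝ (Set.range b) :=
    (hb.linearIndependent.span_eq_top_of_card_eq_finrank hcard).ge
  have hB : ⇑(OrthonormalBasis.mk hb hspan) = b := OrthonormalBasis.coe_mk hb hspan
  have hrep := (OrthonormalBasis.mk hb hspan).sum_repr' u
  rw [hB] at hrep
  set a : Fin 3 → ℝ := fun k => ⟪u, b k⟫ with ha
  have hrep' : ∑ k, a k • b k = u := by
    rw [← hrep]
    exact Finset.sum_congr rfl fun k _ => by rw [ha]; rw [real_inner_comm]
  have hexists : ∃ i, a i ≠ 0 := by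
    by_contra h
    push_neg at h
    have hu0 : u = 0 := by
      rw [← hrep']
      apply Finset.sum_eq_zero
      intro k _
      rw [h k, zero_smul]
    rw [hu0, norm_zero] at hu
    norm_num at hu
  obtain ⟨i, hai⟩ := hexists
  have hio := orthonormal_iff_ite.mp hb
  have hKid : (fun k => ⟪b i, b k⟫) = (Pi.single i 1 : Fin 3 → ℝ) := by
    funext k
    rw [hio i k, Pi.single_apply]
    simp [eq_comm]
  have hzero : ∀ jj, jj ≠ i → a jj = 0 := by
    intro jj hjj
    by_contra hajj
    have hlt := Kcount_lt L d N hd hN a i jj hjj hai hajj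
    have hle := hmax (b i) (hb.1 i)
    rw [J3'_eq_Kcount b hb t L d N u, J3'_eq_Kcount b hb t L d N (b i), hKid] at hle
    rw [ha] at hlt
    omega
  have hu' : u = a i • b i := by
    rw [← hrep']
    rw [Finset.sum_eq_single i
      (fun k _ hk => by rw [hzero k hk, zero_smul])
      (fun h => absurd (Finset.mem_univ i) h)]
  have habs : |a i| = 1 := by
    have hn : ‖u‖ = |a i| * ‖b i‖ := by
      rw [hu', norm_smul, Real.norm_eq_abs]
    rw [hb.1 i, mul_one, hu] at hn
    exact hn.symm
  refine ⟨i, ?_⟩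
  rcases (abs_eq (by norm_num : (0:ℝ) ≤ 1)).1 habs with h | h
  · left
    rw [hu', h, one_smul]
  · right
    rw [hu', h, neg_smul, one_smul]
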